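/- Let ω be a radial weight and ν : 𝔻 → [0,∞) a radial function such that z ↦ ω(z)ν(z) is a radial weight. Let f : 𝔻 → ℂ be measurable and suppose the function z ↦ f(z) · ∫_𝔻 |B^{ων}_z(ζ)| ω(ζ)ν(ζ) dA(ζ) belongs to L¹_ω. Then P_ω(V_{ω,ν}(f))(ζ) = P_ω(f)(ζ) for every ζ ∈ 𝔻. -/

import Mathlib

open MeasureTheory Real Set

noncomputable section

/-- The open unit disc in ℂ. -/
def unitDisc : Set ℂ := {z : ℂ | ‖z‖ < 1}

/-- Normalized area measure dA = dx dy / π on ℂ. -/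
def dA : Measure ℂ := (ENNReal.ofReal (1 / Real.pi)) • (volume : Measure ℂ)

/-- Tail of a radial weight: ω̂(r) = ∫_r^1 ω(s) ds. -/
def wTail (ω : ℂ → ℝ) (r : ℝ) : ℝ := ∫ s in r..1, ω ((s : ℂ))

/-- Moments: ω_x = ∫_0^1 r^x ω(r) dr (real exponent). -/
def wMoment (ω : ℂ → ℝ) (x : ℝ) : ℝ := ∫ r in (0:ℝ)..1, r ^ x * ω ((r : ℂ))

/-- A radial weight: nonnegative, radial, integrable on 𝔻, with strictly positive tails. -/
structure IsRadialWeight (ω : ℂ → ℝ) : Prop where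
  nonneg : ∀ z, 0 ≤ ω z
  radial : ∀ z : ℂ, ω z = ω (((‖z‖ : ℝ) : ℂ))
  integrable : IntegrableOn ω unitDisc dA
  tailPos : ∀ r : ℝ, 0 ≤ r → r < 1 → 0 < wTail ω r

/-- The class D̂ of upper doubling radial weights. -/
def Dhat (ω : ℂ → ℝ) : Prop :=
  ∃ C : ℝ, 0 < C ∧ ∀ r : ℝ, 0 ≤ r → r < 1 → wTail ω r ≤ C * wTail ω ((1 + r) / 2)

/-- The class Ď. -/
def Dcheck (ω : ℂ → ℝ) : Prop :=
  ∃ C K : ℝ, 1 < C ∧ 1 < K ∧ ∀ r : ℝ, 0 ≤ r → r < 1 →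
    C * wTail ω (1 - (1 - r) / K) ≤ wTail ω r

/-- The class D = D̂ ∩ Ď. -/
def Dclass (ω : ℂ → ℝ) : Prop := Dhat ω ∧ Dcheck ω

/-- The Bergman reproducing kernel of A²_ω. -/
def bergmanKernel (ω : ℂ → ℝ) (z ζ : ℂ) : ℂ :=
  ∑' n : ℕ, (starRingEnd ℂ z * ζ) ^ n / (2 * ((wMoment ω (2 * (n : ℝ) + 1) : ℝ) : ℂ))

/-- The Bergman projection P_ω. -/
def bergmanProj (ω : ℂ → ℝ) (g : ℂ → ℂ) (z : ℂ) : ℂ :=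
  ∫ ζ in unitDisc, g ζ * starRingEnd ℂ (bergmanKernel ω z ζ) * ((ω ζ : ℝ) : ℂ) ∂dA

/-- The small Hankel operator h^ω_φ. -/
def hankel (ω : ℂ → ℝ) (φ g : ℂ → ℂ) (z : ℂ) : ℂ :=
  ∫ ζ in unitDisc, φ ζ * g ζ * bergmanKernel ω z ζ * ((ω ζ : ℝ) : ℂ) ∂dA

/-- The transform V_{ω,ν}. -/
def Vop (ω ν : ℂ → ℝ) (f : ℂ → ℂ) (z : ℂ) : ℂ :=
  ((ν z : ℝ) : ℂ) *
    ∫ ζ in unitDisc, f ζ * starRingEnd ℂ (bergmanKernel (fun w => ω w * ν w) z ζ) *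
      ((ω ζ : ℝ) : ℂ) ∂dA

/-- ‖g‖_{L^p_ω} = (∫_𝔻 |g|^p ω dA)^{1/p}. -/
def LpNorm (ω : ℂ → ℝ) (p : ℝ) (g : ℂ → ℂ) : ℝ :=
  (∫ z in unitDisc, ‖g z‖ ^ p * ω z ∂dA) ^ (1 / p)

/-- f ∈ L¹_{ω_log}. -/
def MemL1log (ω : ℂ → ℝ) (f : ℂ → ℂ) : Prop :=
  AEStronglyMeasurable f (dA.restrict unitDisc) ∧
  IntegrableOn (fun z => ‖f z‖ * Real.log (Real.exp 1 / (1 - ‖z‖)) * ω z)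
    unitDisc dA

/-- A bounded analytic function on the unit disc. -/
def BoundedAnalytic (g : ℂ → ℂ) : Prop :=
  DifferentiableOn ℂ g unitDisc ∧ ∃ M : ℝ, ∀ z ∈ unitDisc, ‖g z‖ ≤ M

/-- The set of Bloch seminorm values (1-|z|²)|f'(z)|, z ∈ 𝔻. -/
def blochSet (f : ℂ → ℂ) : Set ℝ :=
  (fun z => (1 - ‖z‖ ^ 2) * ‖deriv f z‖) '' unitDisc

/-- The Bloch norm ‖f‖_ℬ = |f(0)| + sup_{z∈𝔻}(1-|z|²)|f'(z)|. -/
def blochNorm (f : ℂ → ℂ) : ℝ := ‖f 0‖ + sSup (blochSet f)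

/-- Membership in the Bloch space ℬ. -/
def MemBloch (f : ℂ → ℂ) : Prop :=
  DifferentiableOn ℂ f unitDisc ∧ BddAbove (blochSet f)

/-- Admissible bounds M > 0 for h^ω_{conj f} : A^p_ω → conj(A^p_ω). -/
def hankelBoundSet (ω : ℂ → ℝ) (p : ℝ) (f : ℂ → ℂ) : Set ℝ :=
  {M : ℝ | 0 < M ∧ ∀ g : ℂ → ℂ, BoundedAnalytic g →
    LpNorm ω p (hankel ω (fun ζ => starRingEnd ℂ (f ζ)) g) ≤ M * LpNorm ω p g}

/-- Operator norm of the small Hankel operator: least admissible bound. -/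
def hankelNorm (ω : ℂ → ℝ) (p : ℝ) (f : ℂ → ℂ) : ℝ := sInf (hankelBoundSet ω p f)

/-- The set of values |V_{ω,ν}(f)(z)|, z ∈ 𝔻. -/
def VSet (ω ν : ℂ → ℝ) (f : ℂ → ℂ) : Set ℝ :=
  (fun z => ‖Vop ω ν f z‖) '' unitDisc

/-- sup_{z∈𝔻} |V_{ω,ν}(f)(z)|. -/
def VSup (ω ν : ℂ → ℝ) (f : ℂ → ℂ) : ℝ := sSup (VSet ω ν f)

/-- A nonnegative radial function on 𝔻. -/
def IsRadialNonneg (ν : ℂ → ℝ) : Prop :=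
  (∀ z, 0 ≤ ν z) ∧ ∀ z : ℂ, ν z = ν (((‖z‖ : ℝ) : ℂ))

/-- The tail of ν viewed as a radial function on ℂ: z ↦ ν̂(|z|). -/
def tailFun (ν : ℂ → ℝ) : ℂ → ℝ := fun z => wTail ν (‖z‖)

/-!
Writing out `V_{ω,ν}(f)`, the projection `P_ω(V_{ω,ν} f)(ζ)` is an iterated integral over
`𝔻 × 𝔻`; since `B^ω_ζ` is bounded on `𝔻`, the hypothesis on `f` makes the integrand absolutely
integrable, so Fubini lets us integrate first in the variable of `V`. That inner integral is
`∫ B^{ων}_u(z) conj(B^ω_ζ(z)) ω(z)ν(z) dA(z) = conj(B^ω_ζ(u))`, the reproducing property of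
`B^{ων}` applied to the antiholomorphic function `conj ∘ B^ω_ζ`. Expanding `B^ω_ζ` in powers of
`z` with absolutely summable coefficients reduces it to `conj z ^ m`, which in turn follows from
the orthogonality `∫_𝔻 z^n conj(z)^m W dA = 2 W_{2n+1} δ_{nm}` of monomials for a radial weight
`W`, computed in polar coordinates.
-/
open Filter Complex
open scoped ComplexConjugate

theorem measurableSet_unitDisc : MeasurableSet unitDisc :=
  (isOpen_lt continuous_norm continuous_const).measurableSet

instance sFinite_dA : SFinite dA := by
  unfold dA
  infer_instance

namespace IsRadialWeight

variable {μ : ℂ → ℝ}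

theorem integrableOn_Ioc (hμ : IsRadialWeight μ) :
    IntegrableOn (fun s : ℝ => μ s) (Ioc 0 1) := by
  rw [← intervalIntegrable_iff_integrableOn_Ioc_of_le zero_le_one]
  by_contra h
  have htail := hμ.tailPos 0 le_rfl one_pos
  rw [wTail, intervalIntegral.integral_undef h] at htail
  exact lt_irrefl 0 htail

theorem integrableOn_rpow_mul (hμ : IsRadialWeight μ) {x : ℝ} (hx : 0 ≤ x) :
    IntegrableOn (fun r : ℝ => r ^ x * μ r) (Ioc 0 1) := by
  refine hμ.integrableOn_Ioc.mono' ((measurable_id.pow_const x).aestronglyMeasurable.mul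
    hμ.integrableOn_Ioc.aestronglyMeasurable) ?_
  refine (ae_restrict_iff' measurableSet_Ioc).2 (Eventually.of_forall fun r hr => ?_)
  rw [norm_mul, Real.norm_of_nonneg (rpow_nonneg hr.1.le x), Real.norm_of_nonneg (hμ.nonneg _)]
  exact mul_le_of_le_one_left (hμ.nonneg _) (rpow_le_one hr.1.le hr.2 hx)

theorem rpow_mul_wTail_le_wMoment (hμ : IsRadialWeight μ) {x ρ : ℝ} (hx : 0 ≤ x)
    (hρ0 : 0 < ρ) (hρ1 : ρ < 1) : ρ ^ x * wTail μ ρ ≤ wMoment μ x := by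
  have hsub : Ioc ρ 1 ⊆ Ioc 0 1 := Ioc_subset_Ioc_left hρ0.le
  rw [wTail, wMoment, intervalIntegral.integral_of_le hρ1.le,
    intervalIntegral.integral_of_le zero_le_one, ← integral_const_mul]
  calc ∫ r : ℝ in Ioc ρ 1, ρ ^ x * μ r ≤ ∫ r : ℝ in Ioc ρ 1, r ^ x * μ r :=
        setIntegral_mono_on ((hμ.integrableOn_Ioc.mono_set hsub).const_mul _)
          ((hμ.integrableOn_rpow_mul hx).mono_set hsub) measurableSet_Ioc fun r hr =>
          mul_le_mul_of_nonneg_right (rpow_le_rpow hρ0.le hr.1.le hx) (hμ.nonneg _)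
    _ ≤ ∫ r : ℝ in Ioc 0 1, r ^ x * μ r :=
        setIntegral_mono_set (hμ.integrableOn_rpow_mul hx)
          ((ae_restrict_iff' measurableSet_Ioc).2 (Eventually.of_forall fun r hr =>
            mul_nonneg (rpow_nonneg hr.1.le x) (hμ.nonneg _)))
          hsub.eventuallyLE

theorem wMoment_pos (hμ : IsRadialWeight μ) {x : ℝ} (hx : 0 ≤ x) : 0 < wMoment μ x :=
  (mul_pos (rpow_pos_of_pos one_half_pos x) (hμ.tailPos _ one_half_pos.le one_half_lt_one)).trans_le
    (hμ.rpow_mul_wTail_le_wMoment hx one_half_pos one_half_lt_one)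

theorem aestronglyMeasurable_ofReal (hμ : IsRadialWeight μ) :
    AEStronglyMeasurable (fun z => (μ z : ℂ)) (dA.restrict unitDisc) :=
  continuous_ofReal.comp_aestronglyMeasurable hμ.integrable.aestronglyMeasurable

theorem norm_mul_ofReal (hμ : IsRadialWeight μ) (w z : ℂ) : ‖w * μ z‖ = ‖w‖ * μ z := by
  rw [norm_mul, norm_real, Real.norm_of_nonneg (hμ.nonneg z)]

theorem integrable_mul_of_norm_le (hμ : IsRadialWeight μ) {h : ℂ → ℂ}
    (hh : AEStronglyMeasurable h (dA.restrict unitDisc)) {C : ℝ}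
    (hC : ∀ z ∈ unitDisc, ‖h z‖ ≤ C) :
    Integrable (fun z => h z * μ z) (dA.restrict unitDisc) := by
  refine (hμ.integrable.const_mul C).mono' (hh.mul hμ.aestronglyMeasurable_ofReal) ?_
  filter_upwards [ae_restrict_mem measurableSet_unitDisc] with z hz
  rw [hμ.norm_mul_ofReal]
  exact mul_le_mul_of_nonneg_right (hC z hz) (hμ.nonneg z)

theorem integral_norm_mul_le (hμ : IsRadialWeight μ) {h : ℂ → ℂ}
    (hh : AEStronglyMeasurable h (dA.restrict unitDisc)) {C : ℝ}
    (hC : ∀ z ∈ unitDisc, ‖h z‖ ≤ C) :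
    ∫ z in unitDisc, ‖h z * μ z‖ ∂dA ≤ C * ∫ z in unitDisc, μ z ∂dA := by
  rw [← integral_const_mul]
  refine integral_mono_ae (hμ.integrable_mul_of_norm_le hh hC).norm
    (hμ.integrable.const_mul C) ?_
  filter_upwards [ae_restrict_mem measurableSet_unitDisc] with z hz
  rw [hμ.norm_mul_ofReal]
  exact mul_le_mul_of_nonneg_right (hC z hz) (hμ.nonneg z)

theorem integral_tsum_mul (hμ : IsRadialWeight μ) {h : ℕ → ℂ → ℂ}
    (hh : ∀ k, AEStronglyMeasurable (h k) (dA.restrict unitDisc)) {c : ℕ → ℝ}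
    (hc : Summable c) (hb : ∀ k, ∀ z ∈ unitDisc, ‖h k z‖ ≤ c k) :
    ∫ z in unitDisc, (∑' k, h k z) * μ z ∂dA = ∑' k, ∫ z in unitDisc, h k z * μ z ∂dA := by
  simp_rw [← tsum_mul_right]
  refine (integral_tsum_of_summable_integral_norm
    (fun k => hμ.integrable_mul_of_norm_le (hh k) (hb k)) ?_).symm
  exact (hc.mul_right _).of_nonneg_of_le (fun k => integral_nonneg fun _ => norm_nonneg _)
    fun k => hμ.integral_norm_mul_le (hh k) (hb k)

end IsRadialWeight

def bergmanKernelTerm (μ : ℂ → ℝ) (z u : ℂ) (n : ℕ) : ℂ :=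
  (conj z * u) ^ n / (2 * ((wMoment μ (2 * (n : ℝ) + 1) : ℝ) : ℂ))

section BergmanKernel

variable {μ : ℂ → ℝ}

theorem bergmanKernel_eq_tsum (μ : ℂ → ℝ) (z u : ℂ) :
    bergmanKernel μ z u = ∑' n, bergmanKernelTerm μ z u n := rfl

theorem bergmanKernel_eq_tsum_mul_pow (μ : ℂ → ℝ) (z u : ℂ) :
    bergmanKernel μ z u = ∑' n, bergmanKernelTerm μ z 1 n * u ^ n := by
  refine tsum_congr fun n => ?_
  simp only [bergmanKernelTerm, mul_one, mul_pow]
  ring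

theorem continuous_bergmanKernelTerm (μ : ℂ → ℝ) (n : ℕ) :
    Continuous fun p : ℂ × ℂ => bergmanKernelTerm μ p.1 p.2 n :=
  (((continuous_conj.comp continuous_fst).mul continuous_snd).pow n).div_const _

theorem norm_bergmanKernelTerm (hμ : IsRadialWeight μ) (z u : ℂ) (n : ℕ) :
    ‖bergmanKernelTerm μ z u n‖ = (‖z‖ * ‖u‖) ^ n / (2 * wMoment μ (2 * n + 1)) := by
  rw [bergmanKernelTerm, norm_div, norm_pow, norm_mul, norm_mul, RCLike.norm_conj, norm_real,
    Real.norm_of_nonneg (hμ.wMoment_pos (by positivity)).le, Complex.norm_two]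

-- With `ρ = (1 + ‖z‖)/2`, the moment `ω_{2n+1}` is at least `ρ^{2n+1} ω̂(ρ)` and `‖z‖ < ρ²`.
theorem exists_norm_bergmanKernelTerm_le_geometric (hμ : IsRadialWeight μ) {z : ℂ}
    (hz : ‖z‖ < 1) : ∃ C q : ℝ, 0 ≤ q ∧ q < 1 ∧
      ∀ u : ℂ, ‖u‖ ≤ 1 → ∀ n, ‖bergmanKernelTerm μ z u n‖ ≤ C * q ^ n := by
  set ρ := (1 + ‖z‖) / 2 with hρ
  have hρ0 : 0 < ρ := by positivity
  have hρ1 : ρ < 1 := by linarith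
  have hzρ : ‖z‖ < ρ ^ 2 := by nlinarith
  have htail := hμ.tailPos ρ hρ0.le hρ1
  refine ⟨(2 * ρ * wTail μ ρ)⁻¹, ‖z‖ / ρ ^ 2, by positivity,
    (div_lt_one (by positivity)).2 hzρ, fun u hu n => ?_⟩
  have hmom : ρ * (ρ ^ 2) ^ n * wTail μ ρ ≤ wMoment μ (2 * n + 1) := by
    have h := hμ.rpow_mul_wTail_le_wMoment (x := ((2 * n + 1 : ℕ) : ℝ)) (by positivity) hρ0 hρ1
    rw [rpow_natCast, pow_succ, pow_mul, mul_comm _ ρ] at h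
    exact_mod_cast h
  calc ‖bergmanKernelTerm μ z u n‖ = (‖z‖ * ‖u‖) ^ n / (2 * wMoment μ (2 * n + 1)) :=
        norm_bergmanKernelTerm hμ z u n
    _ ≤ ‖z‖ ^ n / (2 * (ρ * (ρ ^ 2) ^ n * wTail μ ρ)) :=
        div_le_div₀ (by positivity)
          (pow_le_pow_left₀ (by positivity) (mul_le_of_le_one_right (norm_nonneg z) hu) n)
          (by positivity) (by linarith)
    _ = (2 * ρ * wTail μ ρ)⁻¹ * (‖z‖ / ρ ^ 2) ^ n := by
        field_simp
        rw [← mul_pow, mul_div_cancel₀ _ (by positivity)]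

theorem summable_norm_bergmanKernelTerm (hμ : IsRadialWeight μ) {z u : ℂ} (hz : ‖z‖ < 1)
    (hu : ‖u‖ ≤ 1) : Summable fun n => ‖bergmanKernelTerm μ z u n‖ := by
  obtain ⟨C, q, hq0, hq1, hb⟩ := exists_norm_bergmanKernelTerm_le_geometric hμ hz
  exact ((summable_geometric_of_lt_one hq0 hq1).mul_left C).of_nonneg_of_le
    (fun _ => norm_nonneg _) (hb u hu)

theorem hasSum_bergmanKernel (hμ : IsRadialWeight μ) {z u : ℂ} (hz : ‖z‖ < 1)
    (hu : ‖u‖ ≤ 1) : HasSum (bergmanKernelTerm μ z u) (bergmanKernel μ z u) :=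
  (summable_norm_bergmanKernelTerm hμ hz hu).of_norm.hasSum

theorem exists_norm_bergmanKernel_le (hμ : IsRadialWeight μ) {z : ℂ} (hz : ‖z‖ < 1) :
    ∃ M : ℝ, ∀ u : ℂ, ‖u‖ ≤ 1 → ‖bergmanKernel μ z u‖ ≤ M := by
  obtain ⟨C, q, hq0, hq1, hb⟩ := exists_norm_bergmanKernelTerm_le_geometric hμ hz
  exact ⟨_, fun u hu =>
    tsum_of_norm_bounded ((hasSum_geometric_of_lt_one hq0 hq1).mul_left C) (hb u hu)⟩

theorem conj_bergmanKernel (μ : ℂ → ℝ) (z u : ℂ) :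
    conj (bergmanKernel μ z u) = bergmanKernel μ u z := by
  rw [bergmanKernel_eq_tsum, bergmanKernel_eq_tsum, Complex.conj_tsum]
  congr 1 with n
  simp only [bergmanKernelTerm, map_div₀, map_pow, map_mul, conj_conj, conj_ofReal, map_ofNat]
  ring

theorem aestronglyMeasurable_bergmanKernel_comp {X : Type*} [TopologicalSpace X]
    [MeasurableSpace X] [OpensMeasurableSpace X] {ν : Measure X} (hμ : IsRadialWeight μ)
    {a b : X → ℂ} (ha : Continuous a) (hb : Continuous b)
    (hab : ∀ᵐ x ∂ν, ‖a x‖ < 1 ∧ ‖b x‖ ≤ 1) :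
    AEStronglyMeasurable (fun x => bergmanKernel μ (a x) (b x)) ν :=
  aestronglyMeasurable_of_tendsto_ae atTop
    (fun _ => (continuous_finsetSum _ fun n _ =>
      (continuous_bergmanKernelTerm μ n).comp (ha.prodMk hb)).aestronglyMeasurable)
    (hab.mono fun _ hx => (hasSum_bergmanKernel hμ hx.1 hx.2).tendsto_sum_nat)

theorem aestronglyMeasurable_bergmanKernel (hμ : IsRadialWeight μ) {w : ℂ} (hw : ‖w‖ < 1) :
    AEStronglyMeasurable (bergmanKernel μ w) (dA.restrict unitDisc) :=
  aestronglyMeasurable_bergmanKernel_comp hμ continuous_const continuous_id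
    ((ae_restrict_mem measurableSet_unitDisc).mono fun _ hz => ⟨hw, le_of_lt hz⟩)

end BergmanKernel

theorem integral_exp_int_mul_I (k : ℤ) :
    ∫ θ in Ioo (-π) π, Complex.exp (k * I * θ) = if k = 0 then ((2 * π : ℝ) : ℂ) else 0 := by
  rw [← integral_Ioc_eq_integral_Ioo, ← intervalIntegral.integral_of_le (by linarith [pi_pos])]
  split_ifs with hk
  · simp [hk, two_mul]
  · have hc : (k : ℂ) * I ≠ 0 := mul_ne_zero (by exact_mod_cast hk) I_ne_zero
    -- `exp (k I π) = exp (k I (-π)) · exp (k · 2πI)`, and the last factor is `1`.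
    rw [integral_exp_mul_complex hc, show (k : ℂ) * I * (π : ℝ) = k * I * ((-π : ℝ) : ℂ) +
      k * (2 * π * I) by push_cast; ring, Complex.exp_add, exp_int_mul_two_pi_mul_I, mul_one,
      sub_self, zero_div]

theorem setIntegral_unitDisc_eq_polar (g : ℂ → ℂ) :
    ∫ z in unitDisc, g z ∂dA =
      (π⁻¹ : ℝ) • ∫ p in Ioo (0 : ℝ) 1 ×ˢ Ioo (-π) π, p.1 • g (Complex.polarCoord.symm p) := by
  have hS : Ioo (0 : ℝ) 1 ×ˢ Ioo (-π) π = {p | p.1 < 1} ∩ polarCoord.target := by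
    ext ⟨r, θ⟩
    simp only [polarCoord_target, mem_prod, mem_Ioo, mem_Ioi, mem_inter_iff, mem_ofPred_eq]
    tauto
  have hmem : ∀ p ∈ polarCoord.target, Complex.polarCoord.symm p ∈ unitDisc ↔ p.1 < 1 :=
    fun p hp => by
      rw [unitDisc, mem_ofPred_eq, Complex.norm_polarCoord_symm, abs_of_pos (mem_prod.1 hp).1]
  rw [dA, Measure.restrict_smul, integral_smul_measure, one_div,
    ENNReal.toReal_ofReal (by positivity), ← integral_indicator measurableSet_unitDisc,
    ← Complex.integral_comp_polarCoord_symm, hS,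
    ← Measure.restrict_restrict (measurableSet_lt measurable_fst measurable_const),
    ← integral_indicator (measurableSet_lt measurable_fst measurable_const)]
  congr 1
  refine setIntegral_congr_fun polarCoord.open_target.measurableSet fun p hp => ?_
  by_cases h : p.1 < 1
  · rw [indicator_of_mem ((hmem p hp).2 h), indicator_of_mem (show p ∈ {p : ℝ × ℝ | p.1 < 1} from h)]
  · rw [indicator_of_notMem (mt (hmem p hp).1 h),
      indicator_of_notMem (show p ∉ {p : ℝ × ℝ | p.1 < 1} from h), smul_zero]

namespace IsRadialWeight

variable {μ : ℂ → ℝ}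

theorem polarCoord_symm_monomial (hμ : IsRadialWeight μ) (n m : ℕ) {r : ℝ} (hr : 0 < r)
    (θ : ℝ) :
    let z := Complex.polarCoord.symm (r, θ)
    r • (z ^ n * conj z ^ m * μ z) =
      ((r ^ (n + m + 1) * μ r : ℝ) : ℂ) * Complex.exp (((n - m : ℤ) : ℂ) * I * θ) := by
  intro z
  have hz : z = r * Complex.exp (θ * I) := by
    simp only [z, Complex.polarCoord_symm_apply, Complex.exp_mul_I, ← ofReal_cos, ← ofReal_sin]
  have hμz : μ z = μ r := by
    rw [hμ.radial, Complex.norm_polarCoord_symm, abs_of_pos hr]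
  rw [hμz, hz, map_mul, conj_ofReal, ← Complex.exp_conj, map_mul, conj_ofReal, conj_I, mul_pow,
    mul_pow, ← Complex.exp_nat_mul, ← Complex.exp_nat_mul, real_smul]
  have he : Complex.exp (((n - m : ℤ) : ℂ) * I * θ) =
      Complex.exp (n * (θ * I)) * Complex.exp (m * (θ * -I)) := by
    rw [← Complex.exp_add]
    push_cast
    ring_nf
  rw [he]
  push_cast
  ring

theorem integral_pow_mul_conj_pow (hμ : IsRadialWeight μ) (n m : ℕ) :
    ∫ z in unitDisc, z ^ n * conj z ^ m * μ z ∂dA =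
      if n = m then ((2 * wMoment μ (2 * n + 1) : ℝ) : ℂ) else 0 := by
  rw [setIntegral_unitDisc_eq_polar,
    setIntegral_congr_fun (measurableSet_Ioo.prod measurableSet_Ioo)
      fun p hp => hμ.polarCoord_symm_monomial n m (mem_prod.1 hp).1.1 p.2,
    Measure.volume_eq_prod, ← Measure.prod_restrict,
    integral_prod_mul (fun r : ℝ => ((r ^ (n + m + 1) * μ r : ℝ) : ℂ))
      (fun θ : ℝ => Complex.exp (((n - m : ℤ) : ℂ) * I * θ)), integral_exp_int_mul_I]
  by_cases h : n = m
  · subst h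
    have hrad : ∫ r in Ioo (0 : ℝ) 1, ((r ^ (n + n + 1) * μ r : ℝ) : ℂ) = wMoment μ (2 * n + 1) := by
      rw [integral_complex_ofReal, wMoment, intervalIntegral.integral_of_le zero_le_one,
        integral_Ioc_eq_integral_Ioo]
      congr 2 with r
      rw [show (2 * (n : ℝ) + 1) = ((n + n + 1 : ℕ) : ℝ) by push_cast; ring, rpow_natCast]
    rw [if_pos (sub_self _), if_pos rfl, hrad, real_smul]
    push_cast
    field_simp
  · rw [if_neg (sub_ne_zero.2 (by exact_mod_cast h)), if_neg h, mul_zero, smul_zero]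

end IsRadialWeight

namespace IsRadialWeight

variable {μ ω : ℂ → ℝ}

theorem integral_bergmanKernel_mul_conj_pow (hμ : IsRadialWeight μ) {u : ℂ} (hu : ‖u‖ < 1)
    (m : ℕ) : ∫ z in unitDisc, bergmanKernel μ u z * conj z ^ m * μ z ∂dA = conj u ^ m := by
  obtain ⟨C, q, hq0, hq1, hb⟩ := exists_norm_bergmanKernelTerm_le_geometric hμ hu
  have hterm : ∀ k, ∫ z in unitDisc, bergmanKernelTerm μ u z k * conj z ^ m * μ z ∂dA =
      if k = m then conj u ^ m else 0 := fun k => by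
    have hk : ((wMoment μ (2 * k + 1) : ℝ) : ℂ) ≠ 0 :=
      ofReal_ne_zero.2 (hμ.wMoment_pos (by positivity)).ne'
    simp_rw [bergmanKernelTerm, mul_pow, mul_div_right_comm, mul_assoc, integral_const_mul,
      ← mul_assoc, hμ.integral_pow_mul_conj_pow]
    split_ifs with h
    · subst h
      push_cast at hk ⊢
      field_simp
    · rw [mul_zero]
  calc ∫ z in unitDisc, bergmanKernel μ u z * conj z ^ m * μ z ∂dA
      = ∑' k, ∫ z in unitDisc, bergmanKernelTerm μ u z k * conj z ^ m * μ z ∂dA := by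
        simp_rw [bergmanKernel_eq_tsum]
        simpa only [tsum_mul_right] using hμ.integral_tsum_mul
          (h := fun k z => bergmanKernelTerm μ u z k * conj z ^ m) (fun k => ((continuous_bergmanKernelTerm μ k).comp
          (continuous_const.prodMk continuous_id)).aestronglyMeasurable.mul
          (continuous_conj.pow m).aestronglyMeasurable)
          ((summable_geometric_of_lt_one hq0 hq1).mul_left C) fun k z hz => by
            rw [norm_mul, norm_pow, RCLike.norm_conj]
            exact (mul_le_of_le_one_right (norm_nonneg _)
              (pow_le_one₀ (norm_nonneg z) hz.le)).trans (hb z hz.le k)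
    _ = conj u ^ m := by simp_rw [hterm, tsum_ite_eq]

theorem integral_bergmanKernel_mul_conj_tsum (hμ : IsRadialWeight μ) {u : ℂ} (hu : ‖u‖ < 1)
    {a : ℕ → ℂ} (ha : Summable fun k => ‖a k‖) :
    ∫ z in unitDisc, bergmanKernel μ u z * conj (∑' k, a k * z ^ k) * μ z ∂dA =
      conj (∑' k, a k * u ^ k) := by
  obtain ⟨M, hM⟩ := exists_norm_bergmanKernel_le hμ hu
  simp_rw [Complex.conj_tsum, ← tsum_mul_left]
  rw [hμ.integral_tsum_mul (h := fun k z => bergmanKernel μ u z * conj (a k * z ^ k))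
    (c := fun k => M * ‖a k‖)
    (fun k => (aestronglyMeasurable_bergmanKernel hμ hu).mul
      (continuous_conj.comp (continuous_const.mul (continuous_pow k))).aestronglyMeasurable)
    (ha.mul_left M) fun k z hz => ?_]
  · refine tsum_congr fun k => ?_
    have hk : ∀ z, bergmanKernel μ u z * conj (a k * z ^ k) * μ z =
        conj (a k) * (bergmanKernel μ u z * conj z ^ k * μ z) := fun z => by
      rw [map_mul, map_pow]
      ring
    simp_rw [hk, integral_const_mul, hμ.integral_bergmanKernel_mul_conj_pow hu, map_mul, map_pow]
  · rw [norm_mul, RCLike.norm_conj, norm_mul, norm_pow, mul_comm ‖a k‖]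
    exact mul_le_mul (hM z hz.le)
      (mul_le_of_le_one_left (norm_nonneg _) (pow_le_one₀ (norm_nonneg z) hz.le))
      (by positivity) ((norm_nonneg _).trans (hM z hz.le))

theorem integral_bergmanKernel_mul_conj_bergmanKernel (hμ : IsRadialWeight μ)
    (hω : IsRadialWeight ω) {ζ u : ℂ} (hζ : ‖ζ‖ < 1) (hu : ‖u‖ < 1) :
    ∫ z in unitDisc, bergmanKernel μ u z * conj (bergmanKernel ω ζ z) * μ z ∂dA =
      conj (bergmanKernel ω ζ u) := by
  simp_rw [bergmanKernel_eq_tsum_mul_pow ω ζ]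
  exact hμ.integral_bergmanKernel_mul_conj_tsum hu
    (summable_norm_bergmanKernelTerm hω hζ (by simp))

end IsRadialWeight

theorem IsRadialWeight.integrable_norm_bergmanKernel_mul {μ : ℂ → ℝ} (hμ : IsRadialWeight μ)
    {u : ℂ} (hu : ‖u‖ < 1) :
    Integrable (fun z => ‖bergmanKernel μ u z‖ * μ z) (dA.restrict unitDisc) := by
  obtain ⟨C, hC⟩ := exists_norm_bergmanKernel_le hμ hu
  simpa only [hμ.norm_mul_ofReal] using
    (hμ.integrable_mul_of_norm_le (aestronglyMeasurable_bergmanKernel hμ hu)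
      fun z hz => hC z hz.le).norm

section Vop

variable {ω ν : ℂ → ℝ} {f g : ℂ → ℂ}

theorem integrable_Vop_integrand (hω : IsRadialWeight ω)
    (hων : IsRadialWeight fun z => ω z * ν z)
    (hfm : AEStronglyMeasurable f (dA.restrict unitDisc))
    (hfint : IntegrableOn (fun z => ‖f z‖ *
      (∫ ζ in unitDisc, ‖bergmanKernel (fun w => ω w * ν w) z ζ‖ * (ω ζ * ν ζ) ∂dA) * ω z)
      unitDisc dA)
    (hg : AEStronglyMeasurable g (dA.restrict unitDisc)) {M : ℝ}
    (hM : ∀ z ∈ unitDisc, ‖g z‖ ≤ M) :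
    Integrable (fun p : ℂ × ℂ => f p.2 * ω p.2 *
      (bergmanKernel (fun w => ω w * ν w) p.2 p.1 * g p.1 * ((ω p.1 * ν p.1 : ℝ) : ℂ)))
      ((dA.restrict unitDisc).prod (dA.restrict unitDisc)) := by
  have hmeas : AEStronglyMeasurable (fun p : ℂ × ℂ => f p.2 * ω p.2 *
      (bergmanKernel (fun w => ω w * ν w) p.2 p.1 * g p.1 * ((ω p.1 * ν p.1 : ℝ) : ℂ)))
      ((dA.restrict unitDisc).prod (dA.restrict unitDisc)) := by
    have hdisc : ∀ᵐ p ∂(dA.restrict unitDisc).prod (dA.restrict unitDisc),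
        ‖p.2‖ < 1 ∧ ‖p.1‖ ≤ 1 := by
      rw [Measure.prod_restrict]
      filter_upwards [ae_restrict_mem (measurableSet_unitDisc.prod measurableSet_unitDisc)]
        with p hp using ⟨hp.2, le_of_lt hp.1⟩
    exact (hfm.mul hω.aestronglyMeasurable_ofReal).comp_snd.mul
      (((aestronglyMeasurable_bergmanKernel_comp hων continuous_snd continuous_fst hdisc).mul
        hg.comp_fst).mul hων.aestronglyMeasurable_ofReal.comp_fst)
  have hsection : ∀ u ∈ unitDisc, Integrable (fun z =>
      bergmanKernel (fun w => ω w * ν w) u z * g z * ((ω z * ν z : ℝ) : ℂ))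
      (dA.restrict unitDisc) := fun u hu => by
    obtain ⟨C, hC⟩ := exists_norm_bergmanKernel_le hων hu
    refine hων.integrable_mul_of_norm_le ((aestronglyMeasurable_bergmanKernel hων hu).mul hg)
      (C := C * M) fun z hz => ?_
    rw [norm_mul]
    exact mul_le_mul (hC z hz.le) (hM z hz) (norm_nonneg _) ((norm_nonneg _).trans (hC z hz.le))
  have hsection_norm : ∀ u ∈ unitDisc,
      ∫ z in unitDisc, ‖bergmanKernel (fun w => ω w * ν w) u z * g z * ((ω z * ν z : ℝ) : ℂ)‖ ∂dA
        ≤ M * ∫ z in unitDisc, ‖bergmanKernel (fun w => ω w * ν w) u z‖ * (ω z * ν z) ∂dA :=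
    fun u hu => by
      rw [← integral_const_mul]
      refine integral_mono_of_nonneg (Eventually.of_forall fun _ => norm_nonneg _)
        ((hων.integrable_norm_bergmanKernel_mul hu).const_mul M) ?_
      filter_upwards [ae_restrict_mem measurableSet_unitDisc] with z hz
      rw [hων.norm_mul_ofReal, norm_mul, mul_comm M, mul_right_comm]
      exact mul_le_mul_of_nonneg_left (hM z hz)
        (mul_nonneg (norm_nonneg _) (hων.nonneg z))
  refine (integrable_prod_iff' hmeas).2 ⟨?_, ?_⟩
  · filter_upwards [ae_restrict_mem measurableSet_unitDisc] with u hu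
    exact (hsection u hu).const_mul (f u * ω u)
  · refine (hfint.const_mul M).mono' hmeas.norm.prod_swap.integral_prod_right' ?_
    filter_upwards [ae_restrict_mem measurableSet_unitDisc] with u hu
    rw [Real.norm_of_nonneg (integral_nonneg fun _ => norm_nonneg _)]
    simp_rw [norm_mul (f u * _), hω.norm_mul_ofReal, integral_const_mul]
    calc ‖f u‖ * ω u * ∫ z in unitDisc,
          ‖bergmanKernel (fun w => ω w * ν w) u z * g z * ((ω z * ν z : ℝ) : ℂ)‖ ∂dA
        ≤ ‖f u‖ * ω u * (M * ∫ z in unitDisc,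
          ‖bergmanKernel (fun w => ω w * ν w) u z‖ * (ω z * ν z) ∂dA) :=
          mul_le_mul_of_nonneg_left (hsection_norm u hu)
            (mul_nonneg (norm_nonneg _) (hω.nonneg u))
      _ = M * (‖f u‖ * (∫ z in unitDisc,
          ‖bergmanKernel (fun w => ω w * ν w) u z‖ * (ω z * ν z) ∂dA) * ω u) := by ring

theorem integral_Vop_mul (hω : IsRadialWeight ω)
    (hων : IsRadialWeight fun z => ω z * ν z)
    (hfm : AEStronglyMeasurable f (dA.restrict unitDisc))
    (hfint : IntegrableOn (fun z => ‖f z‖ *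
      (∫ ζ in unitDisc, ‖bergmanKernel (fun w => ω w * ν w) z ζ‖ * (ω ζ * ν ζ) ∂dA) * ω z)
      unitDisc dA)
    (hg : AEStronglyMeasurable g (dA.restrict unitDisc)) {M : ℝ}
    (hM : ∀ z ∈ unitDisc, ‖g z‖ ≤ M) :
    ∫ z in unitDisc, Vop ω ν f z * g z * ω z ∂dA =
      ∫ u in unitDisc, f u * ω u * ∫ z in unitDisc,
        bergmanKernel (fun w => ω w * ν w) u z * g z * ((ω z * ν z : ℝ) : ℂ) ∂dA ∂dA := by
  calc ∫ z in unitDisc, Vop ω ν f z * g z * ω z ∂dA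
      = ∫ z in unitDisc, ∫ u in unitDisc, f u * ω u *
          (bergmanKernel (fun w => ω w * ν w) u z * g z * ((ω z * ν z : ℝ) : ℂ)) ∂dA ∂dA := by
        refine integral_congr_ae (Eventually.of_forall fun z => ?_)
        simp only [Vop, mul_comm (ν z : ℂ), mul_assoc]
        rw [← integral_mul_const]
        refine integral_congr_ae (Eventually.of_forall fun u => ?_)
        simp only [conj_bergmanKernel]
        push_cast
        ring
    _ = _ := integral_integral_swap (integrable_Vop_integrand hω hων hfm hfint hg hM)
    _ = _ := integral_congr_ae (Eventually.of_forall fun u => integral_const_mul _ _)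

end Vop

theorem stmt_10_general (ω : ℂ → ℝ) (hω : IsRadialWeight ω) (ν : ℂ → ℝ)
    (hων : IsRadialWeight (fun z => ω z * ν z)) (f : ℂ → ℂ)
    (hfm : AEStronglyMeasurable f (dA.restrict unitDisc))
    (hfint : IntegrableOn (fun z => ‖f z‖ *
        (∫ ζ in unitDisc, ‖bergmanKernel (fun w => ω w * ν w) z ζ‖ *
          (ω ζ * ν ζ) ∂dA) * ω z) unitDisc dA)
    (ζ : ℂ) (hζ : ζ ∈ unitDisc) :
    bergmanProj ω (Vop ω ν f) ζ = bergmanProj ω f ζ := by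
  obtain ⟨M, hM⟩ := exists_norm_bergmanKernel_le hω hζ
  calc bergmanProj ω (Vop ω ν f) ζ
      = ∫ u in unitDisc, f u * ω u * ∫ z in unitDisc, bergmanKernel (fun w => ω w * ν w) u z *
          conj (bergmanKernel ω ζ z) * ((ω z * ν z : ℝ) : ℂ) ∂dA ∂dA :=
        integral_Vop_mul hω hων hfm hfint
          (continuous_conj.comp_aestronglyMeasurable (aestronglyMeasurable_bergmanKernel hω hζ))
          fun z hz => (RCLike.norm_conj _).trans_le (hM z hz.le)
    _ = bergmanProj ω f ζ :=
        setIntegral_congr_fun measurableSet_unitDisc fun u hu => by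
          rw [hων.integral_bergmanKernel_mul_conj_bergmanKernel hω hζ hu, mul_right_comm]

/-- P_ω(V_{ω,ν}(f)) = P_ω(f). -/
theorem stmt_10 (ω : ℂ → ℝ) (hω : IsRadialWeight ω) (ν : ℂ → ℝ) (hν : IsRadialNonneg ν)
    (hων : IsRadialWeight (fun z => ω z * ν z)) (f : ℂ → ℂ)
    (hfm : AEStronglyMeasurable f (dA.restrict unitDisc))
    (hfint : IntegrableOn (fun z => ‖f z‖ *
        (∫ ζ in unitDisc, ‖bergmanKernel (fun w => ω w * ν w) z ζ‖ *
          (ω ζ * ν ζ) ∂dA) * ω z) unitDisc dA)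
    (ζ : ℂ) (hζ : ζ ∈ unitDisc) :
    bergmanProj ω (Vop ω ν f) ζ = bergmanProj ω f ζ :=
  stmt_10_general ω hω ν hων f hfm hfint ζ hζ
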